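/- Let N ≥ 2 be an integer, set x_i = y_i = (i−1)/(N−1) for i = 1, …, N and h = 1/(2(N−1)), let φ_t denote the ReLU hat function of half-width h centered at t, let b ∈ [1, 2), and let f₂(x, y) = ReLU(Σ_{i : x_i ≥ 1/2} φ_{x_i}(x) + Σ_{j=1}^{N} φ_{y_j}(y) − b)/(2 − b) − ReLU(Σ_{i : x_i < 1/2} φ_{x_i}(x) + Σ_{j=1}^{N} φ_{y_j}(y) − b)/(2 − b). Then the two-dimensional Lebesgue measure of the set {(x, y) ∈ [0,1]² : f₂(x, y) ≠ 0} is at most N²·(2 − b)²/(N − 1)². -/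

import Mathlib

noncomputable def relu (x : ℝ) : ℝ := max x 0

/-- The one-dimensional ReLU hat function of half-width `h` centered at `t`. -/
noncomputable def hat (h t x : ℝ) : ℝ :=
  (1 / h) * relu (x - t + h) - (2 / h) * relu (x - t) + (1 / h) * relu (x - t - h)

lemma hat_eq {h : ℝ} (hh : 0 < h) (t s : ℝ) :
    hat h t s = max 0 (1 - |s - t| / h) := by
  have hne : h ≠ 0 := hh.ne'
  unfold hat relu
  rcases le_total (s - t) 0 with hu | hu
  · rw [abs_of_nonpos hu, max_eq_right hu]
    rcases le_total (s - t) (-h) with hv | hv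
    · rw [max_eq_right (by linarith), max_eq_right (by linarith),
        max_eq_left (by rw [sub_nonpos, le_div_iff₀ hh]; linarith)]
      ring
    · rw [max_eq_left (by linarith), max_eq_right (by linarith),
        max_eq_right (by rw [sub_nonneg, div_le_one hh]; linarith)]
      field_simp
      ring
  · rw [abs_of_nonneg hu, max_eq_left hu]
    rcases le_total (s - t) h with hv | hv
    · rw [max_eq_left (by linarith), max_eq_right (by linarith),
        max_eq_right (by rw [sub_nonneg, div_le_one hh]; linarith)]
      field_simp
      ring
    · rw [max_eq_left (by linarith), max_eq_left (by linarith),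
        max_eq_left (by rw [sub_nonpos, le_div_iff₀ hh]; linarith)]
      field_simp
      ring

lemma hat_nonneg {h : ℝ} (hh : 0 < h) (t s : ℝ) : 0 ≤ hat h t s := by
  rw [hat_eq hh]; exact le_max_left _ _

lemma hat_le_one {h : ℝ} (hh : 0 < h) (t s : ℝ) : hat h t s ≤ 1 := by
  rw [hat_eq hh]
  exact max_le zero_le_one (by have := abs_nonneg (s - t); have := div_nonneg this hh.le; linarith)

lemma hat_gt {h t s c : ℝ} (hh : 0 < h) (hc : 0 ≤ c) (H : c < hat h t s) :
    |s - t| < (1 - c) * h := by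
  rw [hat_eq hh] at H
  have hv : c < 1 - |s - t| / h := by
    rcases max_cases 0 (1 - |s - t| / h) with ⟨he, _⟩ | ⟨he, _⟩ <;> rw [he] at H <;> linarith
  exact (div_lt_iff₀ hh).mp (by linarith)

lemma hat_ne_zero {h t s : ℝ} (hh : 0 < h) (H : hat h t s ≠ 0) : |s - t| < h := by
  have h0 : 0 < hat h t s := lt_of_le_of_ne (hat_nonneg hh t s) (Ne.symm H)
  have := hat_gt hh le_rfl h0
  linarith

lemma key_sum {h : ℝ} (hh : 0 < h) (x : ℕ → ℝ)
    (hsep : ∀ i j : ℕ, i ≠ j → 2 * h ≤ |x i - x j|) (S : Finset ℕ) (s : ℝ) :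
    (∑ i ∈ S, hat h (x i) s) ≤ 1 ∧
    ∀ c : ℝ, 0 ≤ c → c < ∑ i ∈ S, hat h (x i) s → ∃ i ∈ S, c < hat h (x i) s := by
  classical
  set T := S.filter (fun i => hat h (x i) s ≠ 0) with hT
  have hsum : ∑ i ∈ S, hat h (x i) s = ∑ i ∈ T, hat h (x i) s :=
    (Finset.sum_filter_ne_zero S).symm
  have hcard : T.card ≤ 1 := by
    refine Finset.card_le_one.mpr (fun a ha b hb => ?_)
    rw [hT, Finset.mem_filter] at ha hb
    by_contra hab
    have h2 := hsep a b hab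
    have ha' := hat_ne_zero hh ha.2
    have hb' := hat_ne_zero hh hb.2
    have h3 : |x a - x b| < 2 * h := by
      calc |x a - x b| ≤ |x a - s| + |s - x b| := abs_sub_le _ _ _
        _ < 2 * h := by rw [abs_sub_comm (x a) s]; linarith
    linarith
  constructor
  · rw [hsum]
    calc (∑ i ∈ T, hat h (x i) s) ≤ T.card • (1 : ℝ) :=
          Finset.sum_le_card_nsmul T _ 1 (fun i _ => hat_le_one hh _ _)
      _ = (T.card : ℝ) := by rw [nsmul_eq_mul, mul_one]
      _ ≤ 1 := by exact_mod_cast hcard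
  · intro c hc hgt
    by_contra hcon
    push_neg at hcon
    have : (∑ i ∈ S, hat h (x i) s) ≤ c := by
      rw [hsum]
      calc (∑ i ∈ T, hat h (x i) s) ≤ T.card • c :=
            Finset.sum_le_card_nsmul T _ c
              (fun i hi => hcon i (Finset.mem_of_mem_filter i hi))
        _ = (T.card : ℝ) * c := nsmul_eq_mul _ _
        _ ≤ 1 * c := by
            apply mul_le_mul_of_nonneg_right _ hc
            exact_mod_cast hcard
        _ = c := one_mul c
    linarith

/-- the area of the support of the 2-D classification network on
`[0,1]²` is at most `N²(2-b)²/(N-1)²`. -/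
theorem stmt_7 (N : ℕ) (hN : 2 ≤ N)
    (x : ℕ → ℝ) (hx : ∀ i, x i = ((i : ℝ) - 1) / ((N : ℝ) - 1))
    (h : ℝ) (hh : h = 1 / (2 * ((N : ℝ) - 1)))
    (b : ℝ) (hb : 1 ≤ b ∧ b < 2)
    (f₂ : ℝ → ℝ → ℝ)
    (hf : ∀ s t, f₂ s t =
      relu ((∑ i ∈ (Finset.Icc 1 N).filter (fun i => (1 : ℝ) / 2 ≤ x i), hat h (x i) s)
        + (∑ j ∈ Finset.Icc 1 N, hat h (x j) t) - b) / (2 - b)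
      - relu ((∑ i ∈ (Finset.Icc 1 N).filter (fun i => x i < (1 : ℝ) / 2), hat h (x i) s)
        + (∑ j ∈ Finset.Icc 1 N, hat h (x j) t) - b) / (2 - b)) :
    MeasureTheory.volume
        {p : ℝ × ℝ | p.1 ∈ Set.Icc (0 : ℝ) 1 ∧ p.2 ∈ Set.Icc (0 : ℝ) 1 ∧ f₂ p.1 p.2 ≠ 0}
      ≤ ENNReal.ofReal ((N : ℝ) ^ 2 * (2 - b) ^ 2 / ((N : ℝ) - 1) ^ 2) := by
  classical
  obtain ⟨hb1, hb2⟩ := hb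
  have hN1 : (0 : ℝ) < (N : ℝ) - 1 := by
    have : (2 : ℝ) ≤ (N : ℝ) := by exact_mod_cast hN
    linarith
  have hhp : 0 < h := by rw [hh]; positivity
  -- separation of grid points
  have hsep : ∀ i j : ℕ, i ≠ j → 2 * h ≤ |x i - x j| := by
    have key : ∀ i j : ℕ, i < j → 2 * h ≤ x j - x i := by
      intro i j hij
      have h1 : (i : ℝ) + 1 ≤ (j : ℝ) := by exact_mod_cast hij
      have h2 : x j - x i = ((j : ℝ) - (i : ℝ)) / ((N : ℝ) - 1) := by
        rw [hx, hx]; ring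
      have h3 : 2 * h = 1 / ((N : ℝ) - 1) := by rw [hh]; field_simp
      rw [h2, h3]
      gcongr
      linarith
    intro i j hij
    rcases hij.lt_or_gt with hlt | hlt
    · have := key i j hlt
      rw [abs_sub_comm]
      calc 2 * h ≤ x j - x i := this
        _ ≤ |x j - x i| := le_abs_self _
    · have := key j i hlt
      calc 2 * h ≤ x i - x j := this
        _ ≤ |x i - x j| := le_abs_self _
  set r := (2 - b) * h with hr
  -- pointwise: support lies near grid points
  have hpoint : ∀ s t : ℝ, f₂ s t ≠ 0 →
      (∃ i ∈ Finset.Icc 1 N, |s - x i| < r) ∧ (∃ j ∈ Finset.Icc 1 N, |t - x j| < r) := by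
    intro s t hne
    rw [hf] at hne
    -- one of the two relu arguments is positive
    have hpos : (0 < (∑ i ∈ (Finset.Icc 1 N).filter (fun i => (1 : ℝ) / 2 ≤ x i), hat h (x i) s)
          + (∑ j ∈ Finset.Icc 1 N, hat h (x j) t) - b)
        ∨ (0 < (∑ i ∈ (Finset.Icc 1 N).filter (fun i => x i < (1 : ℝ) / 2), hat h (x i) s)
          + (∑ j ∈ Finset.Icc 1 N, hat h (x j) t) - b) := by
      by_contra hcon
      push_neg at hcon
      obtain ⟨hc1, hc2⟩ := hcon
      apply hne
      unfold relu
      rw [max_eq_right hc1, max_eq_right hc2]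
      simp
    have main : ∀ S : Finset ℕ, S ⊆ Finset.Icc 1 N →
        (0 < (∑ i ∈ S, hat h (x i) s) + (∑ j ∈ Finset.Icc 1 N, hat h (x j) t) - b) →
        (∃ i ∈ Finset.Icc 1 N, |s - x i| < r) ∧ (∃ j ∈ Finset.Icc 1 N, |t - x j| < r) := by
      intro S hS hposS
      obtain ⟨hAle, hAex⟩ := key_sum hhp x hsep S s
      obtain ⟨hBle, hBex⟩ := key_sum hhp x hsep (Finset.Icc 1 N) t
      have h1r : (1 - (b - 1)) * h = r := by rw [hr]; ring
      constructor
      · obtain ⟨i, hiS, hi⟩ := hAex (b - 1) (by linarith) (by linarith)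
        exact ⟨i, hS hiS, by rw [← h1r]; exact hat_gt hhp (by linarith) hi⟩
      · obtain ⟨j, hjS, hj⟩ := hBex (b - 1) (by linarith) (by linarith)
        exact ⟨j, hjS, by rw [← h1r]; exact hat_gt hhp (by linarith) hj⟩
    rcases hpos with hp | hp
    · exact main _ (Finset.filter_subset _ _) hp
    · exact main _ (Finset.filter_subset _ _) hp
  -- inclusion in a finite union of squares
  have hsub : {p : ℝ × ℝ | p.1 ∈ Set.Icc (0 : ℝ) 1 ∧ p.2 ∈ Set.Icc (0 : ℝ) 1 ∧ f₂ p.1 p.2 ≠ 0}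
      ⊆ ⋃ i ∈ Finset.Icc 1 N, ⋃ j ∈ Finset.Icc 1 N,
          (Set.Ioo (x i - r) (x i + r) ×ˢ Set.Ioo (x j - r) (x j + r)) := by
    rintro ⟨s, t⟩ ⟨-, -, hne⟩
    obtain ⟨⟨i, hi, his⟩, ⟨j, hj, hjt⟩⟩ := hpoint s t hne
    simp only [Set.mem_iUnion]
    refine ⟨i, hi, j, hj, ?_⟩
    rw [abs_lt] at his hjt
    exact ⟨⟨by linarith [his.1], by linarith [his.2]⟩, ⟨by linarith [hjt.1], by linarith [hjt.2]⟩⟩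
  have hvol : ∀ a c : ℝ, MeasureTheory.volume (Set.Ioo (a - r) (a + r) ×ˢ Set.Ioo (c - r) (c + r))
      = ENNReal.ofReal (2 * r) * ENNReal.ofReal (2 * r) := by
    intro a c
    rw [MeasureTheory.Measure.volume_eq_prod, MeasureTheory.Measure.prod_prod,
      Real.volume_Ioo, Real.volume_Ioo]
    congr 2 <;> ring
  calc MeasureTheory.volume
        {p : ℝ × ℝ | p.1 ∈ Set.Icc (0 : ℝ) 1 ∧ p.2 ∈ Set.Icc (0 : ℝ) 1 ∧ f₂ p.1 p.2 ≠ 0}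
      ≤ MeasureTheory.volume (⋃ i ∈ Finset.Icc 1 N, ⋃ j ∈ Finset.Icc 1 N,
          (Set.Ioo (x i - r) (x i + r) ×ˢ Set.Ioo (x j - r) (x j + r))) :=
        MeasureTheory.measure_mono hsub
    _ ≤ ∑ i ∈ Finset.Icc 1 N, MeasureTheory.volume (⋃ j ∈ Finset.Icc 1 N,
          (Set.Ioo (x i - r) (x i + r) ×ˢ Set.Ioo (x j - r) (x j + r))) :=
        MeasureTheory.measure_biUnion_finset_le _ _
    _ ≤ ∑ i ∈ Finset.Icc 1 N, ∑ j ∈ Finset.Icc 1 N,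
          MeasureTheory.volume (Set.Ioo (x i - r) (x i + r) ×ˢ Set.Ioo (x j - r) (x j + r)) :=
        Finset.sum_le_sum (fun i _ => MeasureTheory.measure_biUnion_finset_le _ _)
    _ = ∑ i ∈ Finset.Icc 1 N, ∑ j ∈ Finset.Icc 1 N,
          (ENNReal.ofReal (2 * r) * ENNReal.ofReal (2 * r)) := by
        simp only [hvol]
    _ = (N : ENNReal) * ((N : ENNReal) * (ENNReal.ofReal (2 * r) * ENNReal.ofReal (2 * r))) := by
        rw [Finset.sum_const, Finset.sum_const, Nat.card_Icc]
        simp [nsmul_eq_mul, mul_assoc]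
    _ ≤ ENNReal.ofReal ((N : ℝ) ^ 2 * (2 - b) ^ 2 / ((N : ℝ) - 1) ^ 2) := by
        have hrnn : (0 : ℝ) ≤ 2 * r := by
          rw [hr]; nlinarith [hhp.le]
        rw [← ENNReal.ofReal_mul hrnn, ← ENNReal.ofReal_natCast N,
          ← ENNReal.ofReal_mul (by positivity), ← ENNReal.ofReal_mul (by positivity)]
        apply ENNReal.ofReal_le_ofReal
        apply le_of_eq
        rw [hr, hh]
        field_simp
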